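/- arXiv:2406.02519 — 3 statements merged into one kernel-verified Lean document; each statement's English description precedes it below -/
import Mathlib

section
/- Let γ : [0,1] → ℂ be a closed polygonal path with n sides avoiding a point p ∈ ℂ, such that p does not lie on any of the lines containing the sides. Then the absolute value of the winding number of γ around p is strictly less than n/2. -/
/-!
The side `[u, v]` contributes `log (c + 1) - log c` to `2πi` times the winding number, where
`c = (u - p) / (v - u)` is non-real because `p` is off the line through `u` and `v`. The real
parts `log ‖v - p‖ - log ‖u - p‖` telescope to zero around the closed path, and each imaginary
part `arg (c + 1) - arg c` lies in `(-π, π)` since `c` and `c + 1` lie in the same open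
half-plane. Hence `2π` times the winding number has modulus less than `nπ`.
-/

open Complex intervalIntegral

lemma im_div_sub_ne_zero_of_not_collinear {p u v : ℂ}
    (h : ¬ Collinear ℝ ({p, u, v} : Set ℂ)) : ((u - p) / (v - u)).im ≠ 0 := by
  have hvu : v - u ≠ 0 := sub_ne_zero.2 (ne₂₃_of_not_collinear h).symm
  intro him
  apply h
  apply collinear_insert_of_mem_affineSpan_pair
  set r := ((u - p) / (v - u)).re
  have hr : u - p = r * (v - u) := by
    rw [← div_eq_iff hvu]
    exact Complex.ext rfl (by simpa)
  convert AffineMap.lineMap_mem_affineSpan_pair (k := ℝ) (-r) u v using 1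
  rw [AffineMap.lineMap_apply_module', Complex.real_smul]
  push_cast
  linear_combination -hr

lemma integral_inv_add_ofReal {c : ℂ} (hc : c.im ≠ 0) :
    ∫ t in (0:ℝ)..1, (c + t)⁻¹ = log (c + 1) - log c := by
  have hslit (t : ℝ) : c + t ∈ slitPlane := by
    rw [mem_slitPlane_iff]
    simp [hc]
  have hderiv (t : ℝ) : HasDerivAt (fun s : ℝ => log (c + s)) (c + t)⁻¹ t := by
    simpa using (((hasDerivAt_id (t : ℂ)).const_add c).clog (hslit t)).comp_ofReal
  have hcont : Continuous fun t : ℝ => (c + t)⁻¹ :=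
    Continuous.inv₀ (by fun_prop) fun t => slitPlane_ne_zero (hslit t)
  simpa using integral_eq_sub_of_hasDerivAt (fun t _ => hderiv t) (hcont.intervalIntegrable 0 1)

lemma abs_im_log_add_one_sub_log_lt_pi {c : ℂ} (hc : c.im ≠ 0) :
    |(log (c + 1) - log c).im| < Real.pi := by
  have him : (c + 1).im = c.im := by simp
  rw [sub_im, log_im, log_im, abs_lt]
  rcases hc.lt_or_gt with hneg | hpos
  · have h₁ := arg_neg_iff.2 (him ▸ hneg)
    have h₂ := arg_neg_iff.2 hneg
    have := neg_pi_lt_arg (c + 1)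
    have := neg_pi_lt_arg c
    constructor <;> linarith
  · have h₁ := arg_nonneg_iff.2 (him ▸ hpos.le)
    have h₂ := arg_nonneg_iff.2 hpos.le
    have := arg_lt_pi_iff.2 (Or.inr (him ▸ hpos.ne'))
    have := arg_lt_pi_iff.2 (Or.inr hpos.ne')
    constructor <;> linarith

noncomputable def segmentIntegral (p u v : ℂ) : ℂ :=
  ∫ t in (0:ℝ)..1, (v - u) / ((u + t * (v - u)) - p)

section Segment

variable {p u v : ℂ}

lemma segmentIntegral_eq_log_sub_log (h : ¬ Collinear ℝ ({p, u, v} : Set ℂ)) :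
    segmentIntegral p u v = log ((u - p) / (v - u) + 1) - log ((u - p) / (v - u)) := by
  have hvu : v - u ≠ 0 := sub_ne_zero.2 (ne₂₃_of_not_collinear h).symm
  rw [← integral_inv_add_ofReal (im_div_sub_ne_zero_of_not_collinear h), segmentIntegral]
  congr 1 with t
  field_simp
  ring

lemma re_segmentIntegral (h : ¬ Collinear ℝ ({p, u, v} : Set ℂ)) :
    (segmentIntegral p u v).re = Real.log ‖v - p‖ - Real.log ‖u - p‖ := by
  have hvu : ‖v - u‖ ≠ 0 := norm_ne_zero_iff.2 (sub_ne_zero.2 (ne₂₃_of_not_collinear h).symm)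
  have hup : ‖u - p‖ ≠ 0 := norm_ne_zero_iff.2 (sub_ne_zero.2 (ne₁₂_of_not_collinear h).symm)
  have hvp : ‖v - p‖ ≠ 0 := norm_ne_zero_iff.2 (sub_ne_zero.2 (ne₁₃_of_not_collinear h).symm)
  have hc : (u - p) / (v - u) + 1 = (v - p) / (v - u) := by
    rw [div_add_one (by simpa using hvu), sub_add_sub_cancel']
  rw [segmentIntegral_eq_log_sub_log h, sub_re, log_re, log_re, hc, norm_div, norm_div,
    Real.log_div hvp hvu, Real.log_div hup hvu]
  ring

lemma abs_im_segmentIntegral_lt_pi (h : ¬ Collinear ℝ ({p, u, v} : Set ℂ)) :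
    |(segmentIntegral p u v).im| < Real.pi := by
  rw [segmentIntegral_eq_log_sub_log h]
  exact abs_im_log_add_one_sub_log_lt_pi (im_div_sub_ne_zero_of_not_collinear h)

end Segment

theorem stmt_8_general (n : ℕ) [NeZero n] (w : Fin n → ℂ) (p : ℂ)
    (hcol : ∀ j, ¬ Collinear ℝ ({p, w j, w (j + 1)} : Set ℂ)) :
    ‖((1 / (2 * Real.pi * Complex.I)) *
      ∑ j : Fin n, ∫ t in (0:ℝ)..1,
        (w (j + 1) - w j) / ((w j + (t : ℂ) * (w (j + 1) - w j)) - p))‖ < n / 2 := by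
  change ‖_ * ∑ j, segmentIntegral p (w j) (w (j + 1))‖ < _
  set S := ∑ j, segmentIntegral p (w j) (w (j + 1))
  have hre : S.re = 0 := by
    simp only [S, re_sum, re_segmentIntegral (hcol _), Finset.sum_sub_distrib]
    rw [sub_eq_zero]
    exact Equiv.sum_comp (Equiv.addRight 1) (fun j => Real.log ‖w j - p‖)
  have him : |S.im| < n * Real.pi := calc
    |S.im| ≤ ∑ j, |(segmentIntegral p (w j) (w (j + 1))).im| := by
      rw [im_sum]; exact Finset.abs_sum_le_sum_abs _ _
    _ < ∑ _j : Fin n, Real.pi :=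
      Finset.sum_lt_sum_of_nonempty Finset.univ_nonempty fun j _ =>
        abs_im_segmentIntegral_lt_pi (hcol j)
    _ = n * Real.pi := by simp
  rw [norm_mul, ← abs_im_eq_norm.2 hre]
  simp only [one_div, norm_inv, norm_mul, Complex.norm_ofNat, Complex.norm_real,
    Complex.norm_I, Real.norm_of_nonneg Real.pi_pos.le, mul_one]
  rw [inv_mul_lt_iff₀ (by positivity)]
  linarith

/-- The winding number around `p` of a closed polygonal path with `n` sides, where `p`
does not lie on any of the lines containing the sides, has absolute value `< n/2`. -/
theorem stmt_8 (n : ℕ) [NeZero n] (w : Fin n → ℂ) (p : ℂ)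
    (hdist : ∀ j, w j ≠ w (j + 1))
    (hcol : ∀ j, ¬ Collinear ℝ ({p, w j, w (j + 1)} : Set ℂ)) :
    ‖((1 / (2 * Real.pi * Complex.I)) *
      ∑ j : Fin n, ∫ t in (0:ℝ)..1,
        (w (j + 1) - w j) / ((w j + (t : ℂ) * (w (j + 1) - w j)) - p))‖ < n / 2 :=
  stmt_8_general n w p hcol
end

section
/- Let γ be a closed polygonal path with at most 4 sides avoiding a point p not lying on any of the lines containing the sides. Then the winding number of γ around p is at most 1 in absolute value. -/
/-!
A side `[a, b]` whose line misses `p` lies in an open half-plane `0 < re (c * (z - p))`, on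
which `log (c * (z - p))` is a primitive of `1 / (z - p)`. Hence the integral `L` over the side
satisfies `exp L = (b - p) / (a - p)` and `|im L| < π`. Around the closed path the quotients
telescope, so `∑ L = 2πiK` with `K` the winding number, and `2π|K| < nπ ≤ 4π` forces `|K| ≤ 1`.
-/

open Complex Set ComplexConjugate
open scoped Real

theorem integral_div_eq_log_sub_log {z z' : ℝ → ℂ} {c : ℂ} {a b : ℝ}
    (hz : ∀ t ∈ uIcc a b, HasDerivAt z (z' t) t) (hz' : ContinuousOn z' (uIcc a b))
    (hc : ∀ t ∈ uIcc a b, 0 < (c * z t).re) :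
    ∫ t in a..b, z' t / z t = log (c * z b) - log (c * z a) := by
  have hcz : ∀ t ∈ uIcc a b, c ≠ 0 ∧ z t ≠ 0 := fun t ht =>
    mul_ne_zero_iff.mp (ne_zero_of_re_pos (hc t ht))
  refine intervalIntegral.integral_eq_sub_of_hasDerivAt (f := fun t => log (c * z t))
    (fun t ht => ?_) ?_
  · have := ((hz t ht).const_mul c).clog_real (mem_slitPlane_iff.mpr (.inl (hc t ht)))
    rwa [mul_div_mul_left _ _ (hcz t ht).1] at this
  · exact (hz'.div (fun t ht => (hz t ht).continuousAt.continuousWithinAt)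
      fun t ht => (hcz t ht).2).intervalIntegrable

theorem im_conj_sub_mul_sub_ne_zero_of_not_collinear {p a b : ℂ}
    (h : ¬ Collinear ℝ ({p, a, b} : Set ℂ)) : (conj (a - p) * (b - p)).im ≠ 0 := by
  intro him
  apply h
  rcases eq_or_ne a p with rfl | hap
  · simpa using collinear_pair ℝ a b
  rw [collinear_iff_of_mem (mem_insert p _)]
  refine ⟨a - p, ?_⟩
  simp only [mem_insert_iff, mem_singleton_iff, vadd_eq_add, forall_eq_or_imp, forall_eq]
  refine ⟨⟨0, by simp⟩, ⟨1, by simp⟩, (conj (a - p) * (b - p)).re / normSq (a - p), ?_⟩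
  have hconj : conj (a - p) ≠ 0 := (map_ne_zero _).mpr (sub_ne_zero.mpr hap)
  have hre : ((conj (a - p) * (b - p)).re : ℂ) = conj (a - p) * (b - p) := by
    conv_rhs => rw [← re_add_im (conj (a - p) * (b - p)), him]
    simp
  rw [real_smul, ofReal_div, hre, normSq_eq_conj_mul_self]
  field_simp
  ring

/- Along the line, `conj (b - a) * (z - p)` has constant imaginary part `-s`, where
`s = im (conj (a - p) * (b - p))`; multiplying by `I * s` turns it into real part `s ^ 2`. -/
theorem exists_re_mul_pos_of_im_conj_mul_ne_zero {p a b : ℂ}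
    (h : (conj (a - p) * (b - p)).im ≠ 0) :
    ∃ c : ℂ, ∀ t : ℝ, 0 < (c * (a + t * (b - a) - p)).re := by
  refine ⟨I * (conj (a - p) * (b - p)).im * conj (b - a), fun t => ?_⟩
  have hre : (I * (conj (a - p) * (b - p)).im * conj (b - a) * (a + t * (b - a) - p)).re
      = (conj (a - p) * (b - p)).im ^ 2 := by
    simp only [mul_re, mul_im, I_re, I_im, ofReal_re, ofReal_im, conj_re, conj_im, sub_re,
      sub_im, add_re, add_im]
    ring
  rw [hre]
  positivity

theorem exp_integral_segment_eq_div_and_abs_im_lt_pi {p a b : ℂ}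
    (h : ¬ Collinear ℝ ({p, a, b} : Set ℂ)) :
    exp (∫ t in (0:ℝ)..1, (b - a) / ((a + (t : ℂ) * (b - a)) - p)) = (b - p) / (a - p) ∧
      |(∫ t in (0:ℝ)..1, (b - a) / ((a + (t : ℂ) * (b - a)) - p)).im| < π := by
  obtain ⟨c, hc⟩ :=
    exists_re_mul_pos_of_im_conj_mul_ne_zero (im_conj_sub_mul_sub_ne_zero_of_not_collinear h)
  have hderiv (t : ℝ) : HasDerivAt (fun s : ℝ => a + s * (b - a) - p) (b - a) t := by
    simpa using (((hasDerivAt_id (t : ℂ)).comp_ofReal.mul_const (b - a)).const_add a).sub_const p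
  have hI := integral_div_eq_log_sub_log (c := c) (a := 0) (b := 1) (fun t _ => hderiv t)
    continuousOn_const (fun t _ => hc t)
  have hb := hc 1
  have ha := hc 0
  simp only [ofReal_zero, ofReal_one, zero_mul, one_mul, add_zero, add_sub_cancel] at hI ha hb
  rw [hI]
  constructor
  · rw [exp_sub, exp_log (ne_zero_of_re_pos hb), exp_log (ne_zero_of_re_pos ha),
      mul_div_mul_left _ _ (left_ne_zero_of_mul (ne_zero_of_re_pos ha))]
  · have harg (z : ℂ) (hz : 0 < z.re) : |(log z).im| < π / 2 := by
      rw [log_im]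
      exact abs_arg_lt_pi_div_two_iff.mpr (.inl hz)
    calc |(log (c * (b - p)) - log (c * (a - p))).im|
        ≤ |(log (c * (b - p))).im| + |(log (c * (a - p))).im| := by
          rw [sub_im]
          exact abs_sub _ _
      _ < π / 2 + π / 2 := add_lt_add (harg _ hb) (harg _ ha)
      _ = π := add_halves π

theorem Fin.prod_comp_add_one_div_eq_one {n : ℕ} [NeZero n] {M : Type*} [CommGroupWithZero M]
    (f : Fin n → M) (hf : ∀ j, f j ≠ 0) : ∏ j, f (j + 1) / f j = 1 := by
  rw [Finset.prod_div_distrib,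
    Fintype.prod_equiv (Equiv.addRight 1) (fun j => f (j + 1)) f fun _ => rfl]
  exact div_self (Finset.prod_ne_zero_iff.mpr fun j _ => hf j)

theorem norm_one_div_two_pi_I_mul_le_of_exp_eq_one {x : ℂ} {m : ℕ} (hx : exp x = 1)
    (him : |x.im| < 2 * π * (m + 1)) : ‖1 / (2 * π * I) * x‖ ≤ m := by
  obtain ⟨k, rfl⟩ := exp_eq_one_iff.mp hx
  have him_eq : (k * (2 * π * I) : ℂ).im = 2 * π * k := by simp [mul_comm]
  rw [him_eq, abs_mul, abs_of_pos Real.two_pi_pos] at him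
  have hk : |k| < m + 1 := by exact_mod_cast lt_of_mul_lt_mul_left him Real.two_pi_pos.le
  have h2piI : (2 * π * I : ℂ) ≠ 0 := by simp [Real.pi_ne_zero]
  rw [one_div_mul_eq_div, mul_div_cancel_right₀ _ h2piI, norm_intCast]
  exact_mod_cast Int.le_of_lt_add_one hk

theorem stmt_9_general (n : ℕ) [NeZero n] (hn : n ≤ 4) (w : Fin n → ℂ) (p : ℂ)
    (hcol : ∀ j, ¬ Collinear ℝ ({p, w j, w (j + 1)} : Set ℂ)) :
    ‖(1 / (2 * Real.pi * Complex.I)) *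
      ∑ j : Fin n, ∫ t in (0:ℝ)..1,
        (w (j + 1) - w j) / ((w j + (t : ℂ) * (w (j + 1) - w j)) - p)‖ ≤ 1 := by
  have hside := fun j => exp_integral_segment_eq_div_and_abs_im_lt_pi (hcol j)
  refine (norm_one_div_two_pi_I_mul_le_of_exp_eq_one (m := 1) ?_ ?_).trans_eq Nat.cast_one
  · rw [exp_sum, Finset.prod_congr rfl fun j _ => (hside j).1]
    exact Fin.prod_comp_add_one_div_eq_one (fun j => w j - p) fun j hj =>
      im_conj_sub_mul_sub_ne_zero_of_not_collinear (hcol j) (by simp [hj])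
  · have hn' : (n : ℝ) ≤ 4 := by exact_mod_cast hn
    calc |(∑ j, _ : ℂ).im| ≤ ∑ j, |(_ : ℂ).im| := by
          rw [im_sum]
          exact Finset.abs_sum_le_sum_abs _ _
      _ < ∑ _j : Fin n, π :=
          Finset.sum_lt_sum_of_nonempty Finset.univ_nonempty fun j _ => (hside j).2
      _ = n * π := by simp
      _ ≤ 2 * π * ((1 : ℕ) + 1) := by push_cast; nlinarith [Real.pi_pos]

/-- The winding number around `p` of a closed polygonal path with `n ≤ 4` sides, where
`p` does not lie on any of the lines containing the sides, is at most `1` in absolute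
value. -/
theorem stmt_9 (n : ℕ) [NeZero n] (hn : n ≤ 4) (w : Fin n → ℂ) (p : ℂ)
    (hdist : ∀ j, w j ≠ w (j + 1))
    (hcol : ∀ j, ¬ Collinear ℝ ({p, w j, w (j + 1)} : Set ℂ)) :
    ‖(1 / (2 * Real.pi * Complex.I)) *
      ∑ j : Fin n, ∫ t in (0:ℝ)..1,
        (w (j + 1) - w j) / ((w j + (t : ℂ) * (w (j + 1) - w j)) - p)‖ ≤ 1 :=
  stmt_9_general n hn w p hcol
end

section
/- Let w1, ..., w5 ∈ ℂ be the vertices of a closed pentagonal path and p a point not on any line through two consecutive vertices. If the winding number of the path around p equals 2, then every side is oriented to the left with respect to p; that is, for every j (indices mod 5), Im((w_{j+1} - w_j) · conj(w_j - p)) > 0, equivalently, the change of argument of z - p along each segment [w_j, w_{j+1}] is strictly positive. -/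
open Complex

lemma key1 {p q r : ℂ} (h : ¬ Collinear ℝ ({p, q, r} : Set ℂ)) :
    ((starRingEnd ℂ) (q - p) * (r - p)).im ≠ 0 := by
  intro hz
  apply h
  set a := q - p with ha
  set b := r - p with hb
  by_cases haz : a = 0
  · have : q = p := by rw [sub_eq_zero] at haz; exact haz
    subst this
    simp only [Set.insert_comm, Set.insert_idem]
    exact (collinear_pair ℝ q r)
  · have hba : b = ((b / a).re : ℝ) • a := by
      have him : (b / a).im = 0 := by
        rw [Complex.div_im]
        have : (starRingEnd ℂ a * b).im = b.im * a.re - b.re * a.im := by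
          simp [Complex.mul_im]; ring
        rw [this] at hz
        rw [div_sub_div_same, hz, zero_div]
      have : (b / a) = ((b / a).re : ℂ) := by
        apply Complex.ext <;> simp [him]
      calc b = (b / a) * a := by field_simp
        _ = ((b / a).re : ℝ) • a := by rw [this]; simp [Complex.real_smul]
    rw [collinear_iff_of_mem (Set.mem_insert p _)]
    refine ⟨a, ?_⟩
    intro x hx
    rcases hx with rfl | rfl | rfl
    · exact ⟨0, by simp⟩
    · exact ⟨1, by simp [ha]⟩
    · exact ⟨(b / a).re, by rw [← hba]; simp [hb]⟩
open Complex

lemma key2 (a b c : ℂ)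
    (hc : ∀ t : ℝ, t ∈ Set.Icc (0:ℝ) 1 → 0 < (c * (a + (t:ℂ) * (b - a))).re) :
    (∫ t in (0:ℝ)..1, (b - a) / (a + (t:ℂ) * (b - a))) =
      Complex.log (c * b) - Complex.log (c * a) := by
  have hne : ∀ t : ℝ, t ∈ Set.Icc (0:ℝ) 1 → a + (t:ℂ) * (b - a) ≠ 0 := by
    intro t ht h0
    have := hc t ht
    rw [h0, mul_zero] at this
    simp at this
  have key : (∫ t in (0:ℝ)..1, (b - a) / (a + (t:ℂ) * (b - a))) =
      Complex.log (c * (a + (1:ℝ) * (b - a))) - Complex.log (c * (a + (0:ℝ) * (b - a))) := by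
    apply intervalIntegral.integral_eq_sub_of_hasDerivAt (f := fun t : ℝ => Complex.log (c * (a + (t:ℂ) * (b - a))))
    · intro t ht
      rw [Set.uIcc_of_le zero_le_one] at ht
      have hd : a + (t:ℂ) * (b - a) ≠ 0 := hne t ht
      have hz : c * (a + (t:ℂ) * (b - a)) ∈ Complex.slitPlane := Or.inl (hc t ht)
      have hcne : c ≠ 0 := by
        intro h; rw [h, zero_mul] at hz; simp [Complex.slitPlane] at hz
      have h1 : HasDerivAt (fun s : ℂ => c * (a + s * (b - a))) (c * (b - a)) (t:ℂ) := by
        simpa using (((hasDerivAt_id (t:ℂ)).mul_const (b - a)).const_add a).const_mul c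
      have h2 : HasDerivAt (fun s : ℝ => c * (a + (s:ℂ) * (b - a))) (c * (b - a)) t :=
        h1.comp_ofReal
      have h3 := (Complex.hasDerivAt_log hz).comp t h2
      convert h3 using 1
      · rfl
      · rfl
      · field_simp
    · apply ContinuousOn.intervalIntegrable
      rw [Set.uIcc_of_le zero_le_one]
      apply ContinuousOn.div continuousOn_const
      · exact (Continuous.continuousOn (by continuity))
      · exact hne
  rw [key]
  norm_num
lemma key3 (a b : ℂ) (hK : ((starRingEnd ℂ) a * b).im ≠ 0) :
    |(∫ t in (0:ℝ)..1, (b - a) / (a + (t:ℂ) * (b - a))).im| < Real.pi := by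
  set K : ℝ := ((starRingEnd ℂ) a * b).im with hKdef
  set s : ℝ := if 0 < K then 1 else -1 with hs
  set c : ℂ := (s:ℂ) * Complex.I * (starRingEnd ℂ) (b - a) with hcdef
  have hre : ∀ t : ℝ, (c * (a + (t:ℂ) * (b - a))).re = s * K := by
    intro t
    simp only [hcdef, hKdef, Complex.mul_re, Complex.mul_im, Complex.add_re, Complex.add_im,
      Complex.I_re, Complex.I_im, Complex.ofReal_re, Complex.ofReal_im, Complex.conj_re,
      Complex.conj_im, Complex.sub_re, Complex.sub_im]
    ring
  have hsK : 0 < s * K := by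
    rcases lt_trichotomy 0 K with h | h | h
    · rw [hs, if_pos h]; linarith
    · exact absurd h.symm hK
    · rw [hs, if_neg (by linarith)]; nlinarith
  have hc : ∀ t : ℝ, t ∈ Set.Icc (0:ℝ) 1 → 0 < (c * (a + (t:ℂ) * (b - a))).re := by
    intro t _; rw [hre t]; exact hsK
  have heq := key2 a b c hc
  rw [heq]
  have hb : 0 < (c * b).re := by
    have := hc 1 (by norm_num)
    simpa using this
  have ha : 0 < (c * a).re := by
    have := hc 0 (by norm_num)
    simpa using this
  have h1 : |Complex.arg (c * b)| < Real.pi / 2 :=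
    Complex.abs_arg_lt_pi_div_two_iff.mpr (Or.inl hb)
  have h2 : |Complex.arg (c * a)| < Real.pi / 2 :=
    Complex.abs_arg_lt_pi_div_two_iff.mpr (Or.inl ha)
  rw [Complex.sub_im, Complex.log_im, Complex.log_im]
  calc |Complex.arg (c * b) - Complex.arg (c * a)|
      ≤ |Complex.arg (c * b)| + |Complex.arg (c * a)| := abs_sub _ _
    _ < Real.pi / 2 + Real.pi / 2 := by linarith
    _ = Real.pi := by ring

/-- If the winding number of a closed pentagonal path around a point `p` (not on any
line containing a side) equals `2`, then the change of argument of `z - p` along each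
side is strictly positive, i.e. every side is oriented to the left with respect to `p`. -/
theorem stmt_10 (w : Fin 5 → ℂ) (p : ℂ)
    (hdist : ∀ j, w j ≠ w (j + 1))
    (hcol : ∀ j, ¬ Collinear ℝ ({p, w j, w (j + 1)} : Set ℂ))
    (hwind : (1 / (2 * Real.pi * Complex.I)) *
      ∑ j : Fin 5, (∫ t in (0:ℝ)..1,
        (w (j + 1) - w j) / ((w j + (t : ℂ) * (w (j + 1) - w j)) - p)) = 2) :
    ∀ j : Fin 5,
      0 < (∫ t in (0:ℝ)..1,
        (w (j + 1) - w j) / ((w j + (t : ℂ) * (w (j + 1) - w j)) - p)).im := by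
  set I : Fin 5 → ℂ := fun j => ∫ t in (0:ℝ)..1,
      (w (j + 1) - w j) / ((w j + (t : ℂ) * (w (j + 1) - w j)) - p) with hIdef
  have hrw : ∀ j : Fin 5, I j = ∫ t in (0:ℝ)..1,
      ((w (j + 1) - p) - (w j - p)) / ((w j - p) + (t:ℂ) * ((w (j + 1) - p) - (w j - p))) := by
    intro j
    apply intervalIntegral.integral_congr
    intro t _
    ring_nf
  have hpi : ∀ j : Fin 5, |(I j).im| < Real.pi := by
    intro j
    rw [hrw j]
    exact key3 _ _ (key1 (hcol j))
  have hπ : (0:ℝ) < Real.pi := Real.pi_pos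
  have h2pi : (2 * (Real.pi:ℂ) * Complex.I) ≠ 0 := by
    simp [Real.pi_ne_zero, Complex.I_ne_zero]
  have hS : ∑ j : Fin 5, I j = 2 * (2 * (Real.pi:ℂ) * Complex.I) := by
    field_simp at hwind
    linear_combination hwind
  have hSim : ∑ j : Fin 5, (I j).im = 4 * Real.pi := by
    have := congrArg Complex.im hS
    rw [Complex.im_sum] at this
    rw [this]
    simp [Complex.mul_im]
    ring
  intro j
  have hcard : (Finset.univ.erase j).card = 4 := by
    rw [Finset.card_erase_of_mem (Finset.mem_univ j)]
    simp
  have hsum_lt : ∑ k ∈ Finset.univ.erase j, (I k).im < 4 * Real.pi := by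
    calc ∑ k ∈ Finset.univ.erase j, (I k).im
        < ∑ _k ∈ Finset.univ.erase j, Real.pi := by
          refine Finset.sum_lt_sum_of_nonempty ⟨j + 1, Finset.mem_erase.mpr ⟨?_, Finset.mem_univ _⟩⟩
            (fun k _ => lt_of_abs_lt (hpi k))
          intro h
          have := congrArg Fin.val h
          simp [Fin.val_add] at this
          omega
      _ = 4 * Real.pi := by rw [Finset.sum_const, hcard]; push_cast; ring
  have hsplit := Finset.add_sum_erase Finset.univ (fun k => (I k).im) (Finset.mem_univ j)
  rw [hSim] at hsplit
  linarith
end
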